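/- arXiv:2310.07742 — 6 statements merged into one kernel-verified Lean document; each statement's English description precedes it below -/
import Mathlib

section
/- Let S be a numerical semigroup with conductor c(S) > m(S), and let S' = S \ {a} be a child of S obtained by removing a right primitive element a. Then every left primitive element of S is a left primitive element of S'; in particular e_l(S') ≥ e_l(S). -/
/-- A numerical semigroup: a cofinite submonoid of ℕ. -/
def IsNumericalSemigroup (S : Set ℕ) : Prop :=
  0 ∈ S ∧ (∀ a ∈ S, ∀ b ∈ S, a + b ∈ S) ∧ Sᶜ.Finite

/-- A primitive element: a nonzero element of `S` not a sum of two nonzero elements of `S`. -/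
def IsPrimitive (S : Set ℕ) (a : ℕ) : Prop :=
  a ∈ S ∧ a ≠ 0 ∧ ∀ x ∈ S, ∀ y ∈ S, x ≠ 0 → y ≠ 0 → x + y ≠ a

/-- Frobenius number: the largest gap (as a natural number; `0` for `S = ℕ`). -/
noncomputable def frob (S : Set ℕ) : ℕ := sSup Sᶜ

/-- Conductor `c = F + 1`. -/
noncomputable def nsCond (S : Set ℕ) : ℕ := frob S + 1

/-- Multiplicity: least nonzero element. -/
noncomputable def mult (S : Set ℕ) : ℕ := sInf {n | n ∈ S ∧ n ≠ 0}

/-- Genus: number of gaps. -/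
noncomputable def genus (S : Set ℕ) : ℕ := Sᶜ.ncard

/-- Left part `L(S) = {s ∈ S | s < F(S)}`. -/
def leftPart (S : Set ℕ) : Set ℕ := {s | s ∈ S ∧ s < frob S}

/-- The set of primitive elements. -/
def prims (S : Set ℕ) : Set ℕ := {a | IsPrimitive S a}

/-- Embedding dimension: number of primitive elements. -/
noncomputable def edim (S : Set ℕ) : ℕ := (prims S).ncard

/-- Number of left primitive elements. -/
noncomputable def eleft (S : Set ℕ) : ℕ := (prims S ∩ leftPart S).ncard

/-- Right primitive: primitive and greater than the Frobenius number. -/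
def IsRightPrimitive (S : Set ℕ) (a : ℕ) : Prop := IsPrimitive S a ∧ frob S < a

/-- Child in the tree of numerical semigroups. -/
def IsChild (S S' : Set ℕ) : Prop := ∃ a, IsRightPrimitive S a ∧ S' = S \ {a}

/-- Descendant (possibly equal): reachable by removing right primitive elements. -/
def IsDescendant (S T : Set ℕ) : Prop := Relation.ReflTransGen IsChild S T

/-- Wilf's conjecture for `S`. -/
def Wilf (S : Set ℕ) : Prop := nsCond S ≤ edim S * (leftPart S).ncard

/-- The ordinary semigroup `O_m = {0} ∪ (m + ℕ)`. -/
def ordinary (m : ℕ) : Set ℕ := {0} ∪ {n | m ≤ n}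

theorem stmt4 (S : Set ℕ) (hS : IsNumericalSemigroup S) (hc : mult S < nsCond S)
    (a : ℕ) (ha : IsRightPrimitive S a) :
    (∀ b, IsPrimitive S b → b ∈ leftPart S →
        IsPrimitive (S \ {a}) b ∧ b ∈ leftPart (S \ {a})) ∧
      eleft S ≤ eleft (S \ {a}) := by
  have hfa : frob S < a := ha.2
  have hfin : (S \ {a})ᶜ.Finite := by
    have h : (S \ {a})ᶜ = Sᶜ ∪ {a} := by
      ext x; simp [Set.diff_eq, Set.compl_inter]
    rw [h]; exact hS.2.2.union (Set.finite_singleton a)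
  have hale : a ≤ frob (S \ {a}) := le_csSup hfin.bddAbove (by simp [ha.1.1])
  have hmain : ∀ b, IsPrimitive S b → b ∈ leftPart S →
      IsPrimitive (S \ {a}) b ∧ b ∈ leftPart (S \ {a}) := by
    intro b hb hbl
    have hblt : b < frob S := hbl.2
    have hba : b ≠ a := by omega
    exact ⟨⟨⟨hb.1, hba⟩, hb.2.1,
        fun x hx y hy hx0 hy0 => hb.2.2 x hx.1 y hy.1 hx0 hy0⟩,
      ⟨hbl.1, hba⟩, by omega⟩
  refine ⟨hmain, ?_⟩
  apply Set.ncard_le_ncard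
  · rintro b ⟨hb, hbl⟩
    exact ⟨(hmain b hb hbl).1, (hmain b hb hbl).2⟩
  · apply Set.Finite.subset (Set.finite_Iio (frob (S \ {a})))
    rintro b ⟨-, -, h⟩
    exact h
end

section
/- Let S be a numerical semigroup with conductor c(S) > m(S), and let S' = S \ {a} be a child of S obtained by removing a right primitive element a. Then the set of primitive elements P' of S' satisfies P' = P \ {a} or P' = (P \ {a}) ∪ {a+m}, where P is the set of primitive elements of S and m the multiplicity of S. Consequently e(S) − 1 ≤ e(S') ≤ e(S). -/
/-!
Primitive elements of `S` other than `a` stay primitive in the smaller semigroup `S \ {a}`.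
Conversely, a primitive element `b` of `S \ {a}` that was decomposable in `S` must be `a + v`
with `0 ≠ v ∈ S`. If `v > m`, then `b = (a + v - m) + m` is a decomposition in `S \ {a}`, since
`a + v - m > a > F(S)` and `m ≠ a` (as `m ≤ F(S) < a`); hence `v = m`.
-/

namespace Set

variable {α : Type*}

theorem eq_or_eq_union_singleton_of_subset_of_subset {s t : Set α} {x : α} (hst : s ⊆ t)
    (hts : t ⊆ s ∪ {x}) : t = s ∨ t = s ∪ {x} := by
  by_cases hx : x ∈ t
  · exact Or.inr (hts.antisymm (union_subset hst (singleton_subset_iff.mpr hx)))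
  · refine Or.inl (Subset.antisymm (fun y hy => ?_) hst)
    rcases hts hy with hys | rfl
    · exact hys
    · exact absurd hy hx

theorem ncard_le_and_pred_le_of_eq_sdiff_or_eq_sdiff_union {s t : Set α} {a x : α} (ha : a ∈ s)
    (hs : s.Finite) (ht : t = s \ {a} ∨ t = s \ {a} ∪ {x}) :
    s.ncard - 1 ≤ t.ncard ∧ t.ncard ≤ s.ncard := by
  have hpred := pred_ncard_le_ncard_sdiff_singleton s a
  rcases ht with rfl | rfl
  · exact ⟨hpred, ncard_sdiff_singleton_le s a⟩
  · have hfin : (s \ {a} ∪ {x}).Finite := hs.sdiff.union (finite_singleton x)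
    refine ⟨hpred.trans (ncard_le_ncard subset_union_left hfin), ?_⟩
    calc (s \ {a} ∪ {x}).ncard ≤ (s \ {a}).ncard + ({x} : Set α).ncard := ncard_union_le _ _
      _ = s.ncard := by rw [ncard_singleton, ncard_sdiff_singleton_add_one ha hs]

end Set

theorem IsPrimitive.of_subset {S T : Set ℕ} {b : ℕ} (hb : IsPrimitive S b) (hTS : T ⊆ S)
    (hbT : b ∈ T) : IsPrimitive T b :=
  ⟨hbT, hb.2.1, fun x hx y hy => hb.2.2 x (hTS hx) y (hTS hy)⟩

theorem exists_add_eq_of_not_isPrimitive {S : Set ℕ} {b : ℕ} (hbS : b ∈ S) (hb0 : b ≠ 0)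
    (hb : ¬IsPrimitive S b) : ∃ x ∈ S, ∃ y ∈ S, x ≠ 0 ∧ y ≠ 0 ∧ x + y = b := by
  by_contra h
  push Not at h
  exact hb ⟨hbS, hb0, h⟩

theorem sdiff_singleton_prims_subset_prims_sdiff_singleton (S : Set ℕ) (a : ℕ) :
    prims S \ {a} ⊆ prims (S \ {a}) :=
  fun _ ⟨hb, hba⟩ => hb.of_subset Set.sdiff_subset ⟨hb.1, hba⟩

theorem exists_eq_add_of_mem_prims_sdiff_singleton {S : Set ℕ} {a b : ℕ}
    (hb : b ∈ prims (S \ {a})) (hbS : b ∉ prims S) : ∃ v ∈ S, v ≠ 0 ∧ b = a + v := by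
  obtain ⟨x, hx, y, hy, hx0, hy0, rfl⟩ := exists_add_eq_of_not_isPrimitive hb.1.1 hb.2.1 hbS
  by_cases hxa : x = a
  · exact ⟨y, hy, hy0, by rw [hxa]⟩
  by_cases hya : y = a
  · exact ⟨x, hx, hx0, by rw [hya, add_comm]⟩
  exact absurd rfl (hb.2.2 x ⟨hx, hxa⟩ y ⟨hy, hya⟩ hx0 hy0)

theorem mult_le_of_mem {S : Set ℕ} {n : ℕ} (hn : n ∈ S) (h0 : n ≠ 0) : mult S ≤ n :=
  Nat.sInf_le ⟨hn, h0⟩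

namespace IsNumericalSemigroup

variable {S : Set ℕ}

theorem mem_of_frob_lt (hS : IsNumericalSemigroup S) {n : ℕ} (h : frob S < n) : n ∈ S := by
  by_contra hn
  exact (le_csSup hS.2.2.bddAbove hn).not_gt h

theorem mult_mem_and_ne_zero (hS : IsNumericalSemigroup S) : mult S ∈ S ∧ mult S ≠ 0 :=
  Nat.sInf_mem (s := {n | n ∈ S ∧ n ≠ 0})
    ⟨frob S + 1, hS.mem_of_frob_lt (Nat.lt_succ_self _), Nat.succ_ne_zero _⟩

theorem prims_subset_Iic (hS : IsNumericalSemigroup S) : prims S ⊆ Set.Iic (frob S + mult S) := by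
  intro b hb
  by_contra hbig
  rw [Set.mem_Iic, not_le] at hbig
  obtain ⟨hm, hm0⟩ := hS.mult_mem_and_ne_zero
  exact hb.2.2 (mult S) hm (b - mult S) (hS.mem_of_frob_lt (by omega)) hm0 (by omega) (by omega)

theorem prims_finite (hS : IsNumericalSemigroup S) : (prims S).Finite :=
  (Set.finite_Iic _).subset hS.prims_subset_Iic

theorem prims_sdiff_singleton_subset (hS : IsNumericalSemigroup S) {a : ℕ} (hFa : frob S < a)
    (hma : mult S ≠ a) :
    prims (S \ {a}) ⊆ prims S \ {a} ∪ {a + mult S} := by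
  intro b hb
  by_cases hbS : b ∈ prims S
  · exact Or.inl ⟨hbS, hb.1.2⟩
  obtain ⟨v, hv, hv0, rfl⟩ := exists_eq_add_of_mem_prims_sdiff_singleton hb hbS
  obtain ⟨hm, hm0⟩ := hS.mult_mem_and_ne_zero
  refine Or.inr (congrArg (a + ·) ((mult_le_of_mem hv hv0).eq_of_not_lt fun hmv => ?_).symm)
  have hmem : a + v - mult S ∈ S := hS.mem_of_frob_lt (by omega)
  exact hb.2.2 (a + v - mult S) ⟨hmem, Set.mem_singleton_iff.not.mpr (by omega)⟩ (mult S)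
    ⟨hm, hma⟩ (by omega) hm0 (by omega)

end IsNumericalSemigroup

theorem stmt5 (S : Set ℕ) (hS : IsNumericalSemigroup S) (hc : mult S < nsCond S)
    (a : ℕ) (ha : IsRightPrimitive S a) :
    (prims (S \ {a}) = prims S \ {a} ∨
        prims (S \ {a}) = (prims S \ {a}) ∪ {a + mult S}) ∧
      edim S - 1 ≤ edim (S \ {a}) ∧ edim (S \ {a}) ≤ edim S := by
  have hma : mult S ≠ a := by
    have := ha.2
    rw [nsCond] at hc
    omega
  have hprims := Set.eq_or_eq_union_singleton_of_subset_of_subset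
    (sdiff_singleton_prims_subset_prims_sdiff_singleton S a)
    (hS.prims_sdiff_singleton_subset ha.2 hma)
  exact ⟨hprims,
    Set.ncard_le_and_pred_le_of_eq_sdiff_or_eq_sdiff_union ha.1 hS.prims_finite hprims⟩
end

section
/- Assume that every numerical semigroup T with e(T) ≥ m(T)/3 satisfies Wilf's conjecture. Let S be a numerical semigroup with c(S) > m(S) and e_l(S) ≥ m(S)/3. Then every descendant T of S in the tree of numerical semigroups satisfies Wilf's conjecture, i.e., e(T)·|L(T)| ≥ c(T). -/
/-- The ordinary semigroup `O_m = {0} ∪ (m + ℕ)`. -/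
lemma ns_infinite {S : Set ℕ} (hS : IsNumericalSemigroup S) : S.Infinite := by
  have h := hS.2.2.infinite_compl
  rwa [compl_compl] at h

lemma pos_nonempty {S : Set ℕ} (hS : IsNumericalSemigroup S) :
    {n | n ∈ S ∧ n ≠ 0}.Nonempty := by
  obtain ⟨n, hn, hn0⟩ := ((ns_infinite hS).diff (Set.finite_singleton 0)).nonempty
  exact ⟨n, hn, by simpa using hn0⟩

lemma mult_mem {S : Set ℕ} (hS : IsNumericalSemigroup S) :
    mult S ∈ S ∧ mult S ≠ 0 :=
  Nat.sInf_mem (pos_nonempty hS)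

lemma mem_of_frob_lt {S : Set ℕ} (hS : IsNumericalSemigroup S) {n : ℕ}
    (h : frob S < n) : n ∈ S := by
  by_contra hn
  exact absurd (le_csSup hS.2.2.bddAbove hn) (not_le.2 h)

lemma prims_bdd {T : Set ℕ} (hT : IsNumericalSemigroup T) :
    prims T ⊆ Set.Iio (frob T + mult T + 1) := by
  intro p hp
  by_contra hlt
  simp only [Set.mem_Iio, not_lt] at hlt
  obtain ⟨hmT, hm0⟩ := mult_mem hT
  have h1 : p - mult T ∈ T := mem_of_frob_lt hT (by omega)
  have := hp.2.2 (p - mult T) h1 (mult T) hmT (by omega) hm0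
  omega

lemma child_facts {T T' : Set ℕ} (hT : IsNumericalSemigroup T) (hne : Tᶜ.Nonempty)
    (hm : mult T ≤ frob T) (h : IsChild T T') :
    IsNumericalSemigroup T' ∧ frob T < frob T' ∧ mult T' = mult T ∧
      prims T ∩ leftPart T ⊆ prims T' ∩ leftPart T' := by
  obtain ⟨a, ⟨⟨haT, ha0, hprim⟩, hfa⟩, rfl⟩ := h
  have hcompl : (T \ {a})ᶜ = Tᶜ ∪ {a} := by
    ext x; simp [Set.mem_diff]; tauto
  have hNS : IsNumericalSemigroup (T \ {a}) := by
    refine ⟨⟨hT.1, by simpa using fun h0 => ha0 h0.symm⟩, ?_, ?_⟩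
    · rintro x ⟨hx, hxa⟩ y ⟨hy, hya⟩
      refine ⟨hT.2.1 x hx y hy, ?_⟩
      rcases eq_or_ne x 0 with rfl | hx0
      · simpa using hya
      rcases eq_or_ne y 0 with rfl | hy0
      · simpa using hxa
      · simpa using hprim x hx y hy hx0 hy0
    · rw [hcompl]; exact hT.2.2.union (Set.finite_singleton a)
  have hub : ∀ x ∈ (T \ {a})ᶜ, x ≤ a := by
    intro x hx
    rw [hcompl] at hx
    rcases hx with hx | hx
    · exact le_of_lt (lt_of_le_of_lt (le_csSup hT.2.2.bddAbove hx) hfa)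
    · simp only [Set.mem_singleton_iff] at hx; omega
  have hmem : a ∈ (T \ {a})ᶜ := by rw [hcompl]; exact Or.inr rfl
  have hfrob' : frob (T \ {a}) = a :=
    le_antisymm (csSup_le ⟨a, hmem⟩ hub)
      (le_csSup (hcompl ▸ (hT.2.2.union (Set.finite_singleton a)).bddAbove) hmem)
  obtain ⟨hmT, hm0⟩ := mult_mem hT
  have hmmem : mult T ∈ {n | n ∈ T \ {a} ∧ n ≠ 0} :=
    ⟨⟨hmT, by simp; omega⟩, hm0⟩
  have hmult' : mult (T \ {a}) = mult T := by
    have h1 : mult (T \ {a}) ≤ mult T := Nat.sInf_le hmmem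
    have h2 : mult (T \ {a}) ∈ {n | n ∈ T \ {a} ∧ n ≠ 0} := Nat.sInf_mem ⟨mult T, hmmem⟩
    have h3 : mult T ≤ mult (T \ {a}) := Nat.sInf_le ⟨h2.1.1, h2.2⟩
    omega
  refine ⟨hNS, by omega, hmult', ?_⟩
  rintro p ⟨⟨hpT, hp0, hpprim⟩, hpL⟩
  have hpf : p < frob T := hpL.2
  refine ⟨⟨⟨hpT, by simp; omega⟩, hp0, ?_⟩, ⟨hpT, by simp; omega⟩, by rw [hfrob']; omega⟩
  intro x hx y hy hx0 hy0
  exact hpprim x hx.1 y hy.1 hx0 hy0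

theorem stmt6
    (hyp : ∀ T : Set ℕ, IsNumericalSemigroup T → (edim T : ℚ) ≥ (mult T : ℚ) / 3 → Wilf T)
    (S : Set ℕ) (hS : IsNumericalSemigroup S) (hc : mult S < nsCond S)
    (hel : (eleft S : ℚ) ≥ (mult S : ℚ) / 3) :
    ∀ T : Set ℕ, IsDescendant S T → Wilf T := by
  have hmS := mult_mem hS
  have hmf : mult S ≤ frob S := by unfold nsCond at hc; omega
  have key : ∀ T, IsDescendant S T → IsNumericalSemigroup T ∧ mult T = mult S ∧
      frob S ≤ frob T ∧ prims S ∩ leftPart S ⊆ prims T ∩ leftPart T := by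
    intro T hT
    induction hT with
    | refl => exact ⟨hS, rfl, le_refl _, subset_rfl⟩
    | @tail b c hSb hbc ih =>
      obtain ⟨h1, h2, h3, h4⟩ := ih
      have hne : bᶜ.Nonempty := by
        by_contra hemp
        rw [Set.not_nonempty_iff_eq_empty] at hemp
        have hb0 : frob b = 0 := by simp [frob, hemp]
        have := hmS.2
        omega
      have hcf := child_facts h1 hne (by omega) hbc
      exact ⟨hcf.1, hcf.2.2.1.trans h2, h3.trans (le_of_lt hcf.2.1),
        h4.trans hcf.2.2.2⟩
  intro T hT
  obtain ⟨hTNS, hmult, hfrob, hsub⟩ := key T hT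
  apply hyp T hTNS
  have hfin1 : (prims T ∩ leftPart T).Finite :=
    (Set.finite_Iio (frob T)).subset (fun x hx => hx.2.2)
  have hfin2 : (prims T).Finite :=
    (Set.finite_Iio (frob T + mult T + 1)).subset (prims_bdd hTNS)
  have h5 : eleft S ≤ eleft T := Set.ncard_le_ncard hsub hfin1
  have h6 : eleft T ≤ edim T := Set.ncard_le_ncard Set.inter_subset_left hfin2
  have h7 : (eleft S : ℚ) ≤ (edim T : ℚ) := by exact_mod_cast h5.trans h6
  calc (mult T : ℚ) / 3 = (mult S : ℚ) / 3 := by rw [hmult]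
    _ ≤ (eleft S : ℚ) := hel
    _ ≤ (edim T : ℚ) := h7
end

section
/- Assume: (a) every numerical semigroup with e ≤ 3 satisfies Wilf's conjecture, and (b) for a numerical semigroup, c ≥ 4g/3 together with e ≥ 4 implies Wilf's conjecture (as 4|L| ≥ c). Let G be a positive integer and S a numerical semigroup of genus g ≤ G with |L(S)| ≥ G/3. Then every descendant T of S with genus g(T) ≤ G satisfies c(T) ≥ 4·g(T)/3, and hence satisfies Wilf's conjecture. -/
open Classical in
lemma cond_eq (T : Set ℕ) (hT : IsNumericalSemigroup T) (hne : Tᶜ.Nonempty) :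
    nsCond T = (leftPart T).ncard + genus T := by
  classical
  set F := frob T with hFdef
  have hbdd : BddAbove Tᶜ := hT.2.2.bddAbove
  have hF : F ∈ Tᶜ := Nat.sSup_mem hne hbdd
  have hub : ∀ x ∈ Tᶜ, x ≤ F := fun x hx => le_csSup hbdd hx
  have hGap : Tᶜ = ↑((Finset.range (F + 1)).filter (fun x => x ∉ T)) := by
    ext x
    simp only [Finset.coe_filter, Finset.mem_range, Set.mem_setOf_eq, Set.mem_compl_iff]
    constructor
    · intro hx; exact ⟨Nat.lt_succ_of_le (hub x hx), hx⟩
    · intro hx; exact hx.2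
  have hLeft : leftPart T = ↑((Finset.range (F + 1)).filter (fun x => x ∈ T)) := by
    ext x
    simp only [leftPart, Finset.coe_filter, Finset.mem_range, Set.mem_setOf_eq]
    constructor
    · intro hx; exact ⟨Nat.lt_succ_of_lt hx.2, hx.1⟩
    · intro hx
      refine ⟨hx.2, ?_⟩
      have : x ≠ F := fun h => hF (h ▸ hx.2)
      omega
  have := Finset.card_filter_add_card_filter_not
    (s := Finset.range (F + 1)) (p := fun x => x ∈ T)
  rw [nsCond, genus, hGap, hLeft, Set.ncard_coe_finset, Set.ncard_coe_finset]
  simpa [Finset.card_range] using this.symm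

lemma child_step {T T' : Set ℕ} (hT : IsNumericalSemigroup T) (h : IsChild T T') :
    IsNumericalSemigroup T' ∧ leftPart T ⊆ leftPart T' := by
  obtain ⟨a, ⟨⟨haS, ha0, hprim⟩, hfa⟩, rfl⟩ := h
  have hcompl : (T \ {a})ᶜ = Tᶜ ∪ {a} := by
    ext x; by_cases hxa : x = a <;> simp [hxa, haS]
  have hns : IsNumericalSemigroup (T \ {a}) := by
    refine ⟨⟨hT.1, fun h0 => ha0 (by simpa using h0.symm)⟩, ?_, ?_⟩
    · rintro x ⟨hx, hxa⟩ y ⟨hy, hya⟩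
      refine ⟨hT.2.1 x hx y hy, ?_⟩
      simp only [Set.mem_singleton_iff]
      rcases Nat.eq_zero_or_pos x with h0 | h0
      · subst h0; simpa using hya
      rcases Nat.eq_zero_or_pos y with h0' | h0'
      · subst h0'; simpa using hxa
      · exact hprim x hx y hy (by omega) (by omega)
    · rw [hcompl]; exact hT.2.2.union (Set.finite_singleton a)
  have hfrob : frob (T \ {a}) = a := by
    rw [frob, hcompl]
    apply le_antisymm
    · apply csSup_le ⟨a, by simp⟩
      rintro x (hx | hx)
      · exact le_trans (le_csSup hT.2.2.bddAbove hx) hfa.le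
      · simp_all
    · exact le_csSup ((hT.2.2.union (Set.finite_singleton a)).bddAbove) (by simp)
  refine ⟨hns, ?_⟩
  rintro s ⟨hsT, hs⟩
  have hsa : s < a := lt_trans hs hfa
  exact ⟨⟨hsT, fun h => by simp_all⟩, by rw [hfrob]; exact hsa⟩

theorem stmt10
    (hypA : ∀ T : Set ℕ, IsNumericalSemigroup T → edim T ≤ 3 → Wilf T)
    (hypB : ∀ T : Set ℕ, IsNumericalSemigroup T →
      (nsCond T : ℚ) ≥ 4 * (genus T : ℚ) / 3 → 4 ≤ edim T → Wilf T)
    (G : ℕ) (hG : 1 ≤ G) (S : Set ℕ) (hS : IsNumericalSemigroup S)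
    (hg : genus S ≤ G) (hL : ((leftPart S).ncard : ℚ) ≥ (G : ℚ) / 3) :
    ∀ T : Set ℕ, IsDescendant S T → genus T ≤ G →
      (nsCond T : ℚ) ≥ 4 * (genus T : ℚ) / 3 ∧ Wilf T := by
  intro T hdesc hgT
  have key : IsNumericalSemigroup T ∧ leftPart S ⊆ leftPart T := by
    clear hgT
    induction hdesc with
    | refl => exact ⟨hS, subset_rfl⟩
    | tail hbc hchild ih =>
        obtain ⟨h1, h2⟩ := ih
        obtain ⟨h3, h4⟩ := child_step h1 hchild
        exact ⟨h3, h2.trans h4⟩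
  obtain ⟨hTns, hsub⟩ := key
  by_cases hne : Tᶜ.Nonempty
  · have hc := cond_eq T hTns hne
    have hLfin : (leftPart T).Finite :=
      (Set.finite_Iio (frob T)).subset (fun x hx => hx.2)
    have hmono : (leftPart S).ncard ≤ (leftPart T).ncard :=
      Set.ncard_le_ncard hsub hLfin
    have h1 : (nsCond T : ℚ) ≥ 4 * (genus T : ℚ) / 3 := by
      have hLT : ((leftPart T).ncard : ℚ) ≥ (G : ℚ) / 3 :=
        le_trans hL (by exact_mod_cast hmono)
      have hg' : (genus T : ℚ) ≤ (G : ℚ) := by exact_mod_cast hgT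
      rw [hc]
      push_cast
      linarith
    refine ⟨h1, ?_⟩
    by_cases he : edim T ≤ 3
    · exact hypA T hTns he
    · exact hypB T hTns h1 (by omega)
  · have hTc : Tᶜ = ∅ := Set.not_nonempty_iff_eq_empty.mp hne
    have hgen : genus T = 0 := by simp [genus, hTc]
    have h1 : (nsCond T : ℚ) ≥ 4 * (genus T : ℚ) / 3 := by
      rw [hgen]; simp [nsCond]; positivity
    refine ⟨h1, ?_⟩
    have hTuniv : T = Set.univ := Set.compl_empty_iff.mp hTc
    have hsubp : prims T ⊆ {1} := by
      intro a ⟨haT, ha0, hp⟩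
      simp only [Set.mem_singleton_iff]
      by_contra hne1
      have h2 : 2 ≤ a := by omega
      exact hp 1 (by simp [hTuniv]) (a - 1) (by simp [hTuniv]) one_ne_zero (by omega) (by omega)
    have : edim T ≤ 1 := by
      have := Set.ncard_le_ncard hsubp (Set.finite_singleton 1)
      simpa [edim] using this
    exact hypA T hTns (by omega)
end

section
/- Let S be a non-special numerical semigroup (its multiplicity m does not divide its conductor c) with c > m, having no right primitive element a with a ≡ −1 (mod m). Then no descendant of S is special, and moreover every descendant has the same property (no right primitive element congruent to −1 mod its multiplicity, and multiplicity not dividing conductor). -/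
lemma ns_mem_of_frob_lt {S : Set ℕ} (hfin : Sᶜ.Finite) {n : ℕ} (h : frob S < n) : n ∈ S := by
  by_contra hn
  have : n ≤ frob S := le_csSup hfin.bddAbove hn
  omega

lemma frob_child {S : Set ℕ} (hfin : Sᶜ.Finite) {a : ℕ} (ha : frob S < a) :
    frob (S \ {a}) = a := by
  have hc : (S \ {a})ᶜ = Sᶜ ∪ {a} := by
    ext x; by_cases hx : x = a <;> simp [hx, Set.mem_diff]
  rw [frob, hc]
  apply le_antisymm
  · apply csSup_le ⟨a, Or.inr rfl⟩
    rintro x (hx | hx)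
    · have : x ≤ frob S := le_csSup hfin.bddAbove hx
      omega
    · simp_all
  · exact le_csSup ((hfin.union (Set.finite_singleton a)).bddAbove) (Or.inr rfl)

lemma mult_child {S : Set ℕ} {a : ℕ} (hm : mult S ∈ S) (hm0 : mult S ≠ 0) (hma : mult S ≠ a) :
    mult (S \ {a}) = mult S := by
  have h1 : mult S ∈ {n | n ∈ S \ {a} ∧ n ≠ 0} := ⟨⟨hm, hma⟩, hm0⟩
  have h2 : mult (S \ {a}) ≤ mult S := Nat.sInf_le h1
  have h3 : mult (S \ {a}) ∈ {n | n ∈ S \ {a} ∧ n ≠ 0} := Nat.sInf_mem ⟨_, h1⟩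
  have h4 : mult S ≤ mult (S \ {a}) := Nat.sInf_le ⟨h3.1.1, h3.2⟩
  omega

theorem stmt12 (S : Set ℕ) (hS : IsNumericalSemigroup S)
    (hns : ¬ mult S ∣ nsCond S) (hc : mult S < nsCond S)
    (hnr : ∀ a, IsRightPrimitive S a → ¬ mult S ∣ (a + 1)) :
    ∀ T : Set ℕ, IsDescendant S T →
      ¬ mult T ∣ nsCond T ∧ ∀ a, IsRightPrimitive T a → ¬ mult T ∣ (a + 1) := by
  
  suffices h : ∀ T, IsDescendant S T →
      IsNumericalSemigroup T ∧ mult T < nsCond T ∧ ¬ mult T ∣ nsCond T ∧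
      ∀ a, IsRightPrimitive T a → ¬ mult T ∣ (a + 1) by
    intro T hT
    exact ⟨(h T hT).2.2.1, (h T hT).2.2.2⟩
  intro T hT
  induction hT with
  | refl => exact ⟨hS, hc, hns, hnr⟩
  | @tail U V hSU hchild ih =>
    obtain ⟨hUns, hUc, hUd, hUnr⟩ := ih
    obtain ⟨a, ⟨⟨haS, ha0, haprim⟩, haF⟩, rfl⟩ := hchild
    have hfin : Uᶜ.Finite := hUns.2.2
    have hne : Set.Nonempty {n | n ∈ U ∧ n ≠ 0} := ⟨a, haS, ha0⟩
    have hmU : mult U ∈ U ∧ mult U ≠ 0 := Nat.sInf_mem hne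
    have hmF : mult U ≤ frob U := by
      have := hUc; rw [nsCond] at this; omega
    have hF : frob (U \ {a}) = a := frob_child hfin haF
    have hcond' : nsCond (U \ {a}) = a + 1 := by rw [nsCond, hF]
    have hmult' : mult (U \ {a}) = mult U := mult_child hmU.1 hmU.2 (by omega)
    have hns' : IsNumericalSemigroup (U \ {a}) := by
      refine ⟨Set.mem_diff_singleton.mpr ⟨hUns.1, by omega⟩, ?_, ?_⟩
      · rintro x ⟨hx, hxa⟩ y ⟨hy, hya⟩
        refine ⟨hUns.2.1 x hx y hy, ?_⟩
        simp only [Set.mem_singleton_iff]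
        rcases Nat.eq_zero_or_pos x with hx0 | hx0
        · subst hx0; simpa using hya
        rcases Nat.eq_zero_or_pos y with hy0 | hy0
        · subst hy0; simpa using hxa
        · exact haprim x hx y hy (by omega) (by omega)
      · have : (U \ {a})ᶜ = Uᶜ ∪ {a} := by
          ext x; by_cases hx : x = a <;> simp [hx, Set.mem_diff]
        rw [this]; exact hfin.union (Set.finite_singleton a)
    refine ⟨hns', by omega, ?_, ?_⟩
    · rw [hcond', hmult']
      exact hUnr a ⟨⟨haS, ha0, haprim⟩, haF⟩
    · rintro b ⟨⟨⟨hbU, hba⟩, hb0, hbprim⟩, hbF⟩ hdvd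
      rw [hF] at hbF
      rw [hmult'] at hdvd
      simp only [Set.mem_singleton_iff] at hba
      by_cases hbig : frob U + mult U < b
      · have h1 : b - mult U ∈ U := ns_mem_of_frob_lt hfin (by omega)
        by_cases heq : b - mult U = a
        · apply hUnr a ⟨⟨haS, ha0, haprim⟩, haF⟩
          have h2 : mult U ∣ b + 1 - mult U := Nat.dvd_sub hdvd (dvd_refl _)
          have h3 : b + 1 - mult U = a + 1 := by omega
          rwa [h3] at h2
        · exact hbprim (mult U) (Set.mem_diff_singleton.mpr ⟨hmU.1, by omega⟩) (b - mult U)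
            (Set.mem_diff_singleton.mpr ⟨h1, heq⟩) hmU.2 (by omega) (by omega)
      · refine hUnr b ⟨⟨hbU, hb0, ?_⟩, by omega⟩ hdvd
        intro x hx y hy hx0 hy0 hxy
        by_cases hxa : x = a
        · have hym : mult U ≤ y := Nat.sInf_le ⟨hy, hy0⟩
          omega
        by_cases hya : y = a
        · have hxm : mult U ≤ x := Nat.sInf_le ⟨hx, hx0⟩
          omega
        · exact hbprim x (Set.mem_diff_singleton.mpr ⟨hx, hxa⟩) y (Set.mem_diff_singleton.mpr ⟨hy, hya⟩) hx0 hy0 hxy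
end

section
/- Every numerical semigroup of multiplicity m is a descendant (possibly equal) of the ordinary semigroup O_m in the tree of numerical semigroups; that is, S can be obtained from O_m by successively removing right primitive elements. -/
theorem stmt15 (S : Set ℕ) (hS : IsNumericalSemigroup S) (m : ℕ)
    (hm : mult S = m) : IsDescendant (ordinary m) S := by
  obtain ⟨h0, hadd, hfin⟩ := hS
  have hSne : {n | n ∈ S ∧ n ≠ 0}.Nonempty := by
    have hinf : S.Infinite := Set.infinite_of_finite_compl hfin
    obtain ⟨n, hn, hn0⟩ := hinf.exists_gt 0
    exact ⟨n, hn, hn0.ne'⟩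
  have hmS : m ∈ S ∧ m ≠ 0 := hm ▸ Nat.sInf_mem hSne
  have hm1 : 1 ≤ m := Nat.one_le_iff_ne_zero.mpr hmS.2
  have hmle : ∀ n ∈ S, n ≠ 0 → m ≤ n := fun n hn hne => hm ▸ Nat.sInf_le ⟨hn, hne⟩
  set c := nsCond S with hc
  have hcS : ∀ n, c ≤ n → n ∈ S := by
    intro n hn
    by_contra h
    have : n ≤ frob S := le_csSup hfin.bddAbove h
    have : frob S + 1 ≤ n := hn
    omega
  -- the interpolating semigroups
  set T : ℕ → Set ℕ := fun k => S ∪ {n | k ≤ n} with hT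
  have hfrob : ∀ k, 1 ≤ k → frob (T k) < k := by
    intro k hk
    have hsub : (T k)ᶜ ⊆ Sᶜ ∩ {n | n < k} := by
      intro n hn
      simp only [hT, Set.mem_compl_iff, Set.mem_union, Set.mem_setOf_eq, not_or, not_le] at hn
      exact ⟨hn.1, hn.2⟩
    rcases Set.eq_empty_or_nonempty ((T k)ᶜ) with he | hne
    · simp only [frob, he, csSup_empty, Nat.bot_eq_zero]
      omega
    · have hfin' : ((T k)ᶜ).Finite := (hfin.inter_of_left _).subset hsub
      have := hne.csSup_mem hfin'
      exact (hsub this).2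
  have key : ∀ n k, 1 ≤ k → c ≤ k + n → IsDescendant (T k) S := by
    intro n
    induction n with
    | zero =>
      intro k hk hck
      have : T k = S := by
        ext x
        simp only [hT, Set.mem_union, Set.mem_setOf_eq]
        constructor
        · rintro (hx | hx)
          · exact hx
          · exact hcS x (by omega)
        · exact Or.inl
      rw [this]
      exact Relation.ReflTransGen.refl
    | succ n ih =>
      intro k hk hck
      by_cases hkS : k ∈ S
      · have : T k = T (k + 1) := by
          ext x
          simp only [hT, Set.mem_union, Set.mem_setOf_eq]
          constructor
          · rintro (hx | hx)
            · exact Or.inl hx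
            · rcases Nat.eq_or_lt_of_le hx with h | h
              · exact Or.inl (h ▸ hkS)
              · exact Or.inr h
          · rintro (hx | hx)
            · exact Or.inl hx
            · exact Or.inr (by omega)
        rw [this]
        exact ih (k + 1) (by omega) (by omega)
      · -- remove k from T k
        have hprim : IsRightPrimitive (T k) k := by
          refine ⟨⟨Or.inr (show k ≤ k from le_rfl), by omega, ?_⟩, hfrob k hk⟩
          intro x hx y hy hx0 hy0 hxy
          have hxS : x ∈ S := by
            rcases hx with h | h
            · exact h
            · exfalso; simp only [Set.mem_setOf_eq] at h; omega
          have hyS : y ∈ S := by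
            rcases hy with h | h
            · exact h
            · exfalso; simp only [Set.mem_setOf_eq] at h; omega
          exact hkS (hxy ▸ hadd x hxS y hyS)
        have hstep : T (k + 1) = T k \ {k} := by
          ext x
          simp only [hT, Set.mem_union, Set.mem_setOf_eq, Set.mem_diff,
            Set.mem_singleton_iff]
          constructor
          · rintro (hx | hx)
            · exact ⟨Or.inl hx, fun h => hkS (h ▸ hx)⟩
            · exact ⟨Or.inr (by omega), by omega⟩
          · rintro ⟨hx | hx, hne⟩
            · exact Or.inl hx
            · exact Or.inr (by omega)
        exact Relation.ReflTransGen.head ⟨k, hprim, hstep⟩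
          (ih (k + 1) (by omega) (by omega))
  have hOm : ordinary m = T m := by
    ext x
    simp only [ordinary, hT, Set.mem_union, Set.mem_singleton_iff, Set.mem_setOf_eq]
    constructor
    · rintro (rfl | hx)
      · exact Or.inl h0
      · exact Or.inr hx
    · rintro (hx | hx)
      · by_cases hx0 : x = 0
        · exact Or.inl hx0
        · exact Or.inr (hmle x hx hx0)
      · exact Or.inr hx
  rw [hOm]
  exact key c m hm1 (by omega)
end
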